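/- (Local uniqueness near j₀ for the word 212332111.) If S=(a_n)_{n∈ℤ} is a bi-infinite sequence with entries in {1,2,3} satisfying |λ₀(S) − j₀| ≤ 10⁻⁴ and m(S) ≤ j₀ + 10⁻⁴, then S or its transpose Sᵀ (defined by (Sᵀ)_n = a_{−n}) satisfies (a_{−4},…,a_4) = (2,1,2,3,3,2,1,1,1). -/
import Mathlib


open Filter Set

/-- Convergents of a continued fraction: `cfConv n a` is the value of the finite
continued fraction `[a 0; a 1, …, a n]`. -/
noncomputable def cfConv : ℕ → (ℕ → ℕ) → ℝ
  | 0, a => (a 0 : ℝ)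
  | n + 1, a => (a 0 : ℝ) + 1 / cfConv n (fun i => a (i + 1))

/-- The value `[a₀; a₁, a₂, …]` of an infinite continued fraction, as the limit
of its convergents (which exists since all entries are positive integers). -/
noncomputable def cfValue (a : ℕ → ℕ) : ℝ :=
  limUnder atTop (fun n => cfConv n a)

/-- `λ₀(S) = [a₀; a₁, a₂, …] + [0; a₋₁, a₋₂, …]` for a bi-infinite sequence `S`. -/
noncomputable def lambda0 (S : ℤ → ℕ) : ℝ :=
  cfValue (fun n : ℕ => S (n : ℤ)) + 1 / cfValue (fun n : ℕ => S (-(n : ℤ) - 1))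

/-- `λ_k(S) = λ₀` applied to the sequence shifted by `k`. -/
noncomputable def lambdaK (k : ℤ) (S : ℤ → ℕ) : ℝ :=
  lambda0 (fun n => S (n + k))

/-- The Markov value `m(S) = sup_{k ∈ ℤ} λ_k(S)`. -/
noncomputable def markovValue (S : ℤ → ℕ) : ℝ :=
  ⨆ k : ℤ, lambdaK k S

/-- The Lagrange value `ℓ(S) = limsup_{k → +∞} λ_k(S)`. -/
noncomputable def lagrangeValue (S : ℤ → ℕ) : ℝ :=
  Filter.limsup (fun k : ℤ => lambdaK k S) atTop

/-- The Markov spectrum: Markov values of bi-infinite sequences of positive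
integers whose Markov value is finite. -/
def MarkovSpectrum : Set ℝ :=
  {x | ∃ S : ℤ → ℕ, (∀ n, 0 < S n) ∧
    BddAbove (Set.range fun k : ℤ => lambdaK k S) ∧ markovValue S = x}

/-- The Lagrange spectrum: Lagrange values of bi-infinite sequences of positive
integers whose Lagrange value is finite. -/
def LagrangeSpectrum : Set ℝ :=
  {x | ∃ S : ℤ → ℕ, (∀ n, 0 < S n) ∧
    Filter.IsBoundedUnder (· ≤ ·) atTop (fun k : ℤ => lambdaK k S) ∧ lagrangeValue S = x}

/-- The periodic sequence `…212332111…` of period 9 with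
`(a₋₄,…,a₄) = (2,1,2,3,3,2,1,1,1)`. -/
def P1 : ℤ → ℕ := fun n =>
  match (n % 9).toNat with
  | 0 => 3 | 1 => 2 | 2 => 1 | 3 => 1 | 4 => 1 | 5 => 2 | 6 => 1 | 7 => 2 | _ => 3

open Topology

/-- finite CF evaluation over ℝ with seed `t`. -/
noncomputable def FR : List ℕ → ℝ → ℝ
  | [], t => t
  | x :: w, t => (x : ℝ) + 1 / FR w t

def EntOK (w : List ℕ) : Prop := ∀ x ∈ w, 1 ≤ x ∧ x ≤ 3
def SeqOK (a : ℕ → ℕ) : Prop := ∀ n, 1 ≤ a n ∧ a n ≤ 3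

lemma FR_mem {w : List ℕ} (hw : EntOK w) {t : ℝ} (ht : 1 ≤ t) (ht' : t ≤ 4) :
    1 ≤ FR w t ∧ FR w t ≤ 4 := by
  induction w with
  | nil => exact ⟨ht, ht'⟩
  | cons x w ih =>
    have hx := hw x (by simp)
    have h := ih (fun y hy => hw y (by simp [hy]))
    have h0 : (0:ℝ) < FR w t := by linarith [h.1]
    have h1 : 1 / FR w t ≤ 1 := by
      rw [div_le_one h0]; linarith [h.1]
    have h2 : (1:ℝ)/4 ≤ 1 / FR w t := by
      apply one_div_le_one_div_of_le <;> linarith [h.2]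
    have hx1 : (1:ℝ) ≤ (x:ℝ) := by exact_mod_cast hx.1
    have hx3 : (x:ℝ) ≤ 3 := by exact_mod_cast hx.2
    constructor
    · show (1:ℝ) ≤ (x:ℝ) + 1 / FR w t; linarith
    · show (x:ℝ) + 1 / FR w t ≤ 4; linarith

lemma FR_pos {w : List ℕ} (hw : EntOK w) {t : ℝ} (ht : 1 ≤ t) (ht' : t ≤ 4) :
    0 < FR w t := by linarith [(FR_mem hw ht ht').1]

lemma FR_ge_of_ne {w : List ℕ} (hw : EntOK w) (hne : w ≠ []) {t : ℝ} (ht : 1 ≤ t) (ht' : t ≤ 4) :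
    5/4 ≤ FR w t := by
  match w, hne with
  | x :: w, _ =>
    have hx := hw x (by simp)
    have h := FR_mem (fun y hy => hw y (List.mem_cons_of_mem _ hy)) ht ht'
    have h0 : (0:ℝ) < FR w t := by linarith [h.1]
    have h2 : (1:ℝ)/4 ≤ 1 / FR w t := by
      apply one_div_le_one_div_of_le <;> linarith [h.2]
    have hx1 : (1:ℝ) ≤ (x:ℝ) := by exact_mod_cast hx.1
    show (5:ℝ)/4 ≤ (x:ℝ) + 1 / FR w t
    linarith

lemma FR_between {w : List ℕ} (hw : EntOK w) {t u s : ℝ}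
    (h1 : 1 ≤ t) (htu : t ≤ u) (hus : u ≤ s) (h4 : s ≤ 4) :
    min (FR w t) (FR w s) ≤ FR w u ∧ FR w u ≤ max (FR w t) (FR w s) := by
  induction w with
  | nil =>
    simp only [FR]
    constructor
    · exact le_trans (min_le_left _ _) htu
    · exact le_trans hus (le_max_right _ _)
  | cons x w ih =>
    have hw' : EntOK w := fun y hy => hw y (by simp [hy])
    have hA := FR_mem hw' (t := t) h1 (by linarith)
    have hB := FR_mem hw' (t := u) (by linarith) (by linarith)
    have hC := FR_mem hw' (t := s) (by linarith) h4
    have h := ih hw'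
    have hA0 : (0:ℝ) < FR w t := by linarith [hA.1]
    have hB0 : (0:ℝ) < FR w u := by linarith [hB.1]
    have hC0 : (0:ℝ) < FR w s := by linarith [hC.1]
    show min ((x:ℝ) + 1 / FR w t) ((x:ℝ) + 1 / FR w s) ≤ (x:ℝ) + 1 / FR w u ∧
      (x:ℝ) + 1 / FR w u ≤ max ((x:ℝ) + 1 / FR w t) ((x:ℝ) + 1 / FR w s)
    rcases le_total (FR w t) (FR w s) with hts | hts
    · have hmin : min (FR w t) (FR w s) = FR w t := min_eq_left hts
      have hmax : max (FR w t) (FR w s) = FR w s := max_eq_right hts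
      rw [hmin] at h; rw [hmax] at h
      have i1 : 1 / FR w s ≤ 1 / FR w u := one_div_le_one_div_of_le hB0 h.2
      have i2 : 1 / FR w u ≤ 1 / FR w t := one_div_le_one_div_of_le hA0 h.1
      constructor
      · exact le_trans (min_le_right _ _) (by linarith)
      · exact le_trans (by linarith) (le_max_left _ _)
    · have hmin : min (FR w t) (FR w s) = FR w s := min_eq_right hts
      have hmax : max (FR w t) (FR w s) = FR w t := max_eq_left hts
      rw [hmin] at h; rw [hmax] at h
      have i1 : 1 / FR w t ≤ 1 / FR w u := one_div_le_one_div_of_le hB0 h.2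
      have i2 : 1 / FR w u ≤ 1 / FR w s := one_div_le_one_div_of_le hC0 h.1
      constructor
      · exact le_trans (min_le_left _ _) (by linarith)
      · exact le_trans (by linarith) (le_max_right _ _)

lemma FR_dist {w : List ℕ} (hw : EntOK w) {t s : ℝ}
    (ht : 1 ≤ t) (ht' : t ≤ 4) (hs : 1 ≤ s) (hs' : s ≤ 4) :
    |FR w t - FR w s| ≤ (75/16) * (16/25) ^ w.length := by
  induction w with
  | nil =>
    simp only [FR, List.length_nil, pow_zero, mul_one]
    rw [abs_le]; constructor <;> linarith
  | cons x w ih =>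
    have hw' : EntOK w := fun y hy => hw y (by simp [hy])
    have hA := FR_mem hw' ht ht'
    have hB := FR_mem hw' hs hs'
    have hA0 : (0:ℝ) < FR w t := by linarith [hA.1]
    have hB0 : (0:ℝ) < FR w s := by linarith [hB.1]
    have key : FR (x :: w) t - FR (x :: w) s = (FR w s - FR w t) / (FR w t * FR w s) := by
      show ((x:ℝ) + 1 / FR w t) - ((x:ℝ) + 1 / FR w s) = _
      field_simp
      ring
    have hd : (0:ℝ) < FR w t * FR w s := mul_pos hA0 hB0
    rw [key, abs_div, abs_of_pos hd]
    rcases eq_or_ne w ([] : List ℕ) with rfl | hne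
    · simp only [FR] at *
      have h1 : |s - t| ≤ 3 := by rw [abs_le]; constructor <;> linarith
      have h2 : (1:ℝ) ≤ t * s := by nlinarith
      calc |s - t| / (t * s) ≤ 3 / 1 := by
              apply div_le_div₀ (by norm_num) h1 (by norm_num) h2
        _ ≤ (75/16) * (16/25) ^ ([] : List ℕ).length.succ := by norm_num
    · have h5t := FR_ge_of_ne hw' hne ht ht'
      have h5s := FR_ge_of_ne hw' hne hs hs'
      have hprod : (25:ℝ)/16 ≤ FR w t * FR w s := by nlinarith
      have habs : |FR w s - FR w t| ≤ (75/16) * (16/25) ^ w.length := by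
        rw [abs_sub_comm]; exact ih hw'
      have hstep : |FR w s - FR w t| / (FR w t * FR w s)
          ≤ ((75/16) * (16/25) ^ w.length) / (25/16) := by
        apply div_le_div₀ (by positivity) habs (by norm_num) hprod
      calc |FR w s - FR w t| / (FR w t * FR w s)
          ≤ ((75/16) * (16/25) ^ w.length) / (25/16) := hstep
        _ = (75/16) * (16/25) ^ (w.length + 1) := by ring
        _ = (75/16) * (16/25) ^ (x :: w).length := by simp

lemma FR_append (u v : List ℕ) (t : ℝ) : FR (u ++ v) t = FR u (FR v t) := by
  induction u with
  | nil => simp [FR]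
  | cons x u ih => simp [FR, ih]

lemma cfConv_eq_FR (n : ℕ) (a : ℕ → ℕ) :
    cfConv n a = FR ((List.range n).map a) (a n) := by
  induction n generalizing a with
  | zero => simp [cfConv, FR]
  | succ n ih =>
    have : (List.range (n+1)).map a = a 0 :: (List.range n).map (fun i => a (i + 1)) := by
      rw [List.range_succ_eq_map, List.map_cons, List.map_map]
      rfl
    rw [this]
    show (a 0 : ℝ) + 1 / cfConv n (fun i => a (i + 1)) = _
    rw [ih (fun i => a (i + 1))]
    rfl

lemma cfConv_mem {a : ℕ → ℕ} (ha : SeqOK a) (n : ℕ) :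
    1 ≤ cfConv n a ∧ cfConv n a ≤ 4 := by
  rw [cfConv_eq_FR]
  have hw : EntOK ((List.range n).map a) := by
    intro x hx
    rcases List.mem_map.1 hx with ⟨i, _, rfl⟩
    exact ha i
  have h1 : (1:ℝ) ≤ (a n : ℝ) := by exact_mod_cast (ha n).1
  have h3 : (a n : ℝ) ≤ 4 := by
    have h := (ha n).2
    have : (a n : ℝ) ≤ 3 := by exact_mod_cast h
    linarith
  exact FR_mem hw h1 h3

lemma cfConv_tendsto {a : ℕ → ℕ} (ha : SeqOK a) :
    Tendsto (fun n => cfConv n a) atTop (𝓝 (cfValue a)) := by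
  have hstep : ∀ n, dist (cfConv n a) (cfConv (n+1) a) ≤ (75/16) * (16/25) ^ n := by
    intro n
    have hw : EntOK ((List.range n).map a) := by
      intro x hx; rcases List.mem_map.1 hx with ⟨i, _, rfl⟩; exact ha i
    have e1 : cfConv (n+1) a = FR ((List.range n).map a) (FR [a n] (a (n+1))) := by
      rw [cfConv_eq_FR, List.range_succ, List.map_append, FR_append]
      simp
    have e0 : cfConv n a = FR ((List.range n).map a) (a n) := cfConv_eq_FR n a
    have h1 : (1:ℝ) ≤ (a n : ℝ) := by exact_mod_cast (ha n).1
    have h3 : (a n : ℝ) ≤ 4 := by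
      have := (ha n).2
      have : (a n : ℝ) ≤ 3 := by exact_mod_cast this
      linarith
    have ht' : 1 ≤ FR [a n] ((a (n+1) : ℕ) : ℝ) ∧ FR [a n] ((a (n+1) : ℕ) : ℝ) ≤ 4 := by
      apply FR_mem
      · intro x hx; simp at hx; subst hx; exact ha n
      · exact_mod_cast (ha (n+1)).1
      · have : (a (n+1) : ℝ) ≤ 3 := by exact_mod_cast (ha (n+1)).2
        linarith
    rw [e0, e1, Real.dist_eq]
    have := FR_dist hw h1 h3 ht'.1 ht'.2
    simpa using this
  have hc : CauchySeq (fun n => cfConv n a) :=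
    cauchySeq_of_le_geometric (16/25) (75/16) (by norm_num) hstep
  obtain ⟨L, hL⟩ := cauchySeq_tendsto_of_complete hc
  have : cfValue a = L := hL.limUnder_eq
  rw [this]; exact hL

lemma cfValue_mem {a : ℕ → ℕ} (ha : SeqOK a) : 1 ≤ cfValue a ∧ cfValue a ≤ 4 := by
  have h := cfConv_tendsto ha
  constructor
  · exact ge_of_tendsto' h (fun n => (cfConv_mem ha n).1)
  · exact le_of_tendsto' h (fun n => (cfConv_mem ha n).2)

lemma SeqOK_shift {a : ℕ → ℕ} (ha : SeqOK a) (k : ℕ) : SeqOK (fun n => a (n + k)) :=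
  fun n => ha (n + k)

lemma cfValue_rec {a : ℕ → ℕ} (ha : SeqOK a) :
    cfValue a = (a 0 : ℝ) + 1 / cfValue (fun n => a (n + 1)) := by
  have ha' : SeqOK (fun n => a (n + 1)) := SeqOK_shift ha 1
  have ht := cfConv_tendsto ha
  have ht' := cfConv_tendsto ha'
  have hpos : cfValue (fun n => a (n + 1)) ≠ 0 := by
    have := (cfValue_mem ha').1; intro h; rw [h] at this; linarith
  have h2 : Tendsto (fun n => cfConv (n+1) a) atTop (𝓝 (cfValue a)) :=
    ht.comp (tendsto_add_atTop_nat 1)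
  have h3 : (fun n => cfConv (n+1) a)
      = fun n => (a 0 : ℝ) + 1 / cfConv n (fun i => a (i + 1)) := rfl
  have h4 : Tendsto (fun n => (a 0 : ℝ) + 1 / cfConv n (fun i => a (i + 1))) atTop
      (𝓝 ((a 0 : ℝ) + 1 / cfValue (fun n => a (n + 1)))) := by
    apply tendsto_const_nhds.add
    simpa [one_div] using ht'.inv₀ hpos
  rw [h3] at h2
  exact tendsto_nhds_unique h2 h4

lemma cfValue_lb {a : ℕ → ℕ} (ha : SeqOK a) : 5/4 ≤ cfValue a := by
  have ha' : SeqOK (fun n => a (n + 1)) := SeqOK_shift ha 1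
  have h := cfValue_mem ha'
  have h0 : (0:ℝ) < cfValue (fun n => a (n + 1)) := by linarith [h.1]
  have h2 : (1:ℝ)/4 ≤ 1 / cfValue (fun n => a (n + 1)) := by
    apply one_div_le_one_div_of_le <;> linarith [h.2]
  have h1 : (1:ℝ) ≤ (a 0 : ℝ) := by exact_mod_cast (ha 0).1
  rw [cfValue_rec ha]; linarith

lemma cfValue_ub {a : ℕ → ℕ} (ha : SeqOK a) : cfValue a ≤ 19/5 := by
  have ha' : SeqOK (fun n => a (n + 1)) := SeqOK_shift ha 1
  have h := cfValue_lb ha'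
  have h0 : (0:ℝ) < cfValue (fun n => a (n + 1)) := by linarith
  have h2 : 1 / cfValue (fun n => a (n + 1)) ≤ 4/5 := by
    rw [div_le_div_iff₀ h0 (by norm_num)]; linarith
  have h1 : (a 0 : ℝ) ≤ 3 := by exact_mod_cast (ha 0).2
  rw [cfValue_rec ha]; linarith

lemma cfValue_window {a : ℕ → ℕ} (ha : SeqOK a) (k : ℕ) :
    cfValue a = FR ((List.range k).map a) (cfValue (fun n => a (n + k))) := by
  induction k with
  | zero => simp [FR]
  | succ k ih =>
    rw [ih]
    have hk : SeqOK (fun n => a (n + k)) := SeqOK_shift ha k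
    have e : cfValue (fun n => a (n + k)) = FR [a k] (cfValue (fun n => a (n + (k+1)))) := by
      rw [cfValue_rec hk]
      have e1 : (fun n => a (n + 1 + k)) = (fun n => a (n + (k + 1))) := by
        funext n; congr 1; omega
      rw [e1]
      simp [FR]
    rw [e, ← FR_append]
    congr 1
    rw [List.range_succ, List.map_append]
    simp

lemma cfValue_enclosure {a : ℕ → ℕ} (ha : SeqOK a) (k : ℕ) :
    min (FR ((List.range k).map a) (5/4)) (FR ((List.range k).map a) (19/5))
      ≤ cfValue a ∧
    cfValue a ≤ max (FR ((List.range k).map a) (5/4)) (FR ((List.range k).map a) (19/5)) := by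
  have hw : EntOK ((List.range k).map a) := by
    intro x hx; rcases List.mem_map.1 hx with ⟨i, _, rfl⟩; exact ha i
  have hk : SeqOK (fun n => a (n + k)) := SeqOK_shift ha k
  rw [cfValue_window ha k]
  exact FR_between hw (by norm_num) (cfValue_lb hk) (cfValue_ub hk) (by norm_num)

/-! ### Rational pair layer -/

def FP : List ℕ → ℤ × ℤ → ℤ × ℤ
  | [], t => t
  | x :: w, t =>
    let p := FP w t
    ((x : ℤ) * p.1 + p.2, p.1)

def leQ (a b : ℤ × ℤ) : Bool := a.1 * b.2 ≤ b.1 * a.2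
def ltQ (a b : ℤ × ℤ) : Bool := a.1 * b.2 < b.1 * a.2
def addQ (a b : ℤ × ℤ) : ℤ × ℤ := (a.1 * b.2 + b.1 * a.2, a.2 * b.2)
def invQ (a : ℤ × ℤ) : ℤ × ℤ := (a.2, a.1)
def minQ (a b : ℤ × ℤ) : ℤ × ℤ := if leQ a b then a else b
def maxQ (a b : ℤ × ℤ) : ℤ × ℤ := if leQ a b then b else a
def qlo : ℤ × ℤ := (5, 4)
def qhi : ℤ × ℤ := (19, 5)

noncomputable def valQ (a : ℤ × ℤ) : ℝ := (a.1 : ℝ) / (a.2 : ℝ)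

def PosQ (a : ℤ × ℤ) : Prop := 0 < a.1 ∧ 0 < a.2

lemma FP_pos {w : List ℕ} {t : ℤ × ℤ} (ht : PosQ t) : PosQ (FP w t) := by
  induction w with
  | nil => exact ht
  | cons x w ih =>
    refine ⟨?_, ih.1⟩
    have h1 : (0:ℤ) ≤ (x:ℤ) * (FP w t).1 := mul_nonneg (by positivity) ih.1.le
    have := ih.2
    simp only [FP]
    omega

lemma valQ_pos {a : ℤ × ℤ} (ha : PosQ a) : 0 < valQ a := by
  unfold valQ
  have h1 : (0:ℝ) < (a.1 : ℝ) := by exact_mod_cast ha.1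
  have h2 : (0:ℝ) < (a.2 : ℝ) := by exact_mod_cast ha.2
  positivity

lemma FP_val {w : List ℕ} {t : ℤ × ℤ} (ht : PosQ t) :
    valQ (FP w t) = FR w (valQ t) := by
  induction w with
  | nil => rfl
  | cons x w ih =>
    have hp := FP_pos (w := w) ht
    have h1 : ((FP w t).1 : ℝ) ≠ 0 := by exact_mod_cast hp.1.ne'
    have h2 : ((FP w t).2 : ℝ) ≠ 0 := by exact_mod_cast hp.2.ne'
    show ((x : ℤ) * (FP w t).1 + (FP w t).2 : ℤ) / ((FP w t).1 : ℝ) = (x:ℝ) + 1 / FR w (valQ t)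
    rw [← ih]
    unfold valQ
    push_cast
    field_simp

lemma leQ_iff {a b : ℤ × ℤ} (ha : 0 < a.2) (hb : 0 < b.2) :
    leQ a b = true ↔ valQ a ≤ valQ b := by
  have ha' : (0:ℝ) < (a.2 : ℝ) := by exact_mod_cast ha
  have hb' : (0:ℝ) < (b.2 : ℝ) := by exact_mod_cast hb
  unfold leQ valQ
  rw [div_le_div_iff₀ ha' hb', decide_eq_true_eq]
  constructor
  · intro h; calc ((a.1:ℝ) * b.2) = ((a.1 * b.2 : ℤ) : ℝ) := by push_cast; ring
      _ ≤ ((b.1 * a.2 : ℤ) : ℝ) := by exact_mod_cast h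
      _ = (b.1:ℝ) * a.2 := by push_cast; ring
  · intro h
    have : ((a.1 * b.2 : ℤ) : ℝ) ≤ ((b.1 * a.2 : ℤ) : ℝ) := by push_cast; push_cast at h; linarith
    exact_mod_cast this

lemma ltQ_iff {a b : ℤ × ℤ} (ha : 0 < a.2) (hb : 0 < b.2) :
    ltQ a b = true ↔ valQ a < valQ b := by
  have ha' : (0:ℝ) < (a.2 : ℝ) := by exact_mod_cast ha
  have hb' : (0:ℝ) < (b.2 : ℝ) := by exact_mod_cast hb
  unfold ltQ valQ
  rw [div_lt_div_iff₀ ha' hb', decide_eq_true_eq]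
  constructor
  · intro h
    have : ((a.1 * b.2 : ℤ) : ℝ) < ((b.1 * a.2 : ℤ) : ℝ) := by exact_mod_cast h
    push_cast at this; linarith
  · intro h
    have : ((a.1 * b.2 : ℤ) : ℝ) < ((b.1 * a.2 : ℤ) : ℝ) := by push_cast; linarith
    exact_mod_cast this

lemma minQ_val {a b : ℤ × ℤ} (ha : 0 < a.2) (hb : 0 < b.2) :
    valQ (minQ a b) = min (valQ a) (valQ b) := by
  unfold minQ
  rcases hle : leQ a b with hF | hT
  · simp only [Bool.false_eq_true, if_false]
    have : ¬ (valQ a ≤ valQ b) := by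
      rw [← leQ_iff ha hb]; simp [hle]
    rw [min_eq_right (le_of_not_ge this)]
  · simp only [if_true]
    rw [min_eq_left ((leQ_iff ha hb).1 hle)]

lemma maxQ_val {a b : ℤ × ℤ} (ha : 0 < a.2) (hb : 0 < b.2) :
    valQ (maxQ a b) = max (valQ a) (valQ b) := by
  unfold maxQ
  rcases hle : leQ a b with hF | hT
  · simp only [Bool.false_eq_true, if_false]
    have : ¬ (valQ a ≤ valQ b) := by
      rw [← leQ_iff ha hb]; simp [hle]
    rw [max_eq_left (le_of_not_ge this)]
  · simp only [if_true]
    rw [max_eq_right ((leQ_iff ha hb).1 hle)]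

lemma minQ_pos {a b : ℤ × ℤ} (ha : PosQ a) (hb : PosQ b) : PosQ (minQ a b) := by
  unfold minQ; split <;> assumption

lemma maxQ_pos {a b : ℤ × ℤ} (ha : PosQ a) (hb : PosQ b) : PosQ (maxQ a b) := by
  unfold maxQ; split <;> assumption

lemma addQ_val {a b : ℤ × ℤ} (ha : 0 < a.2) (hb : 0 < b.2) :
    valQ (addQ a b) = valQ a + valQ b := by
  have ha' : ((a.2 : ℝ)) ≠ 0 := by exact_mod_cast ha.ne'
  have hb' : ((b.2 : ℝ)) ≠ 0 := by exact_mod_cast hb.ne'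
  unfold addQ valQ
  push_cast
  field_simp

lemma invQ_val (a : ℤ × ℤ) : valQ (invQ a) = 1 / valQ a := by
  unfold invQ valQ
  rw [one_div, inv_div]

/-! ### The checker -/

def lamLoP (u v : List ℕ) : ℤ × ℤ :=
  addQ (minQ (FP u qlo) (FP u qhi)) (invQ (maxQ (FP v qlo) (FP v qhi)))
def lamHiP (u v : List ℕ) : ℤ × ℤ :=
  addQ (maxQ (FP u qlo) (FP u qhi)) (invQ (minQ (FP v qlo) (FP v qhi)))

lemma addQ_pos {a b : ℤ × ℤ} (ha : PosQ a) (hb : PosQ b) : PosQ (addQ a b) := by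
  constructor
  · have := mul_pos ha.1 hb.2
    have := mul_pos hb.1 ha.2
    show 0 < a.1 * b.2 + b.1 * a.2
    omega
  · exact mul_pos ha.2 hb.2

lemma invQ_pos {a : ℤ × ℤ} (ha : PosQ a) : PosQ (invQ a) := ⟨ha.2, ha.1⟩

lemma qlo_pos : PosQ qlo := by constructor <;> norm_num [qlo]
lemma qhi_pos : PosQ qhi := by constructor <;> norm_num [qhi]

lemma lamLoP_pos (u v : List ℕ) : PosQ (lamLoP u v) :=
  addQ_pos (minQ_pos (FP_pos qlo_pos) (FP_pos qhi_pos))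
    (invQ_pos (maxQ_pos (FP_pos qlo_pos) (FP_pos qhi_pos)))
lemma lamHiP_pos (u v : List ℕ) : PosQ (lamHiP u v) :=
  addQ_pos (maxQ_pos (FP_pos qlo_pos) (FP_pos qhi_pos))
    (invQ_pos (minQ_pos (FP_pos qlo_pos) (FP_pos qhi_pos)))

lemma valQ_qlo : valQ qlo = 5/4 := by norm_num [valQ, qlo]
lemma valQ_qhi : valQ qhi = 19/5 := by norm_num [valQ, qhi]

/-- The bridge: interval bounds for `λ_k(S)` from finite windows. -/
lemma lambdaK_bounds {S : ℤ → ℕ} (hS : ∀ n, 1 ≤ S n ∧ S n ≤ 3) (k : ℤ) (u v : List ℕ)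
    (hu : u = (List.range u.length).map (fun i : ℕ => S (k + (i : ℤ))))
    (hv : v = (List.range v.length).map (fun i : ℕ => S (k - 1 - (i : ℤ)))) :
    valQ (lamLoP u v) ≤ lambdaK k S ∧ lambdaK k S ≤ valQ (lamHiP u v) := by
  set A : ℕ → ℕ := fun n => S ((n : ℤ) + k) with hA_def
  set B : ℕ → ℕ := fun n => S (-(n : ℤ) - 1 + k) with hB_def
  have hrep : lambdaK k S = cfValue A + 1 / cfValue B := rfl
  have hA : SeqOK A := fun n => hS _
  have hB : SeqOK B := fun n => hS _
  have hu' : u = (List.range u.length).map A := by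
    conv_lhs => rw [hu]
    apply List.map_congr_left; intro i _
    show S (k + i) = S ((i : ℤ) + k); congr 1; ring
  have hv' : v = (List.range v.length).map B := by
    conv_lhs => rw [hv]
    apply List.map_congr_left; intro i _
    show S (k - 1 - i) = S (-(i : ℤ) - 1 + k); congr 1; ring
  have hEu : EntOK u := by
    intro x hx; rw [hu'] at hx; rcases List.mem_map.1 hx with ⟨i, _, rfl⟩; exact hA i
  have hEv : EntOK v := by
    intro x hx; rw [hv'] at hx; rcases List.mem_map.1 hx with ⟨i, _, rfl⟩; exact hB i
  have encU := cfValue_enclosure hA u.length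
  have encV := cfValue_enclosure hB v.length
  rw [← hu'] at encU
  rw [← hv'] at encV
  have hu1 := FR_mem (t := (5:ℝ)/4) hEu (by norm_num) (by norm_num)
  have hu2 := FR_mem (t := (19:ℝ)/5) hEu (by norm_num) (by norm_num)
  have hv1 := FR_mem (t := (5:ℝ)/4) hEv (by norm_num) (by norm_num)
  have hv2 := FR_mem (t := (19:ℝ)/5) hEv (by norm_num) (by norm_num)
  have hBpos : (0:ℝ) < cfValue B := by
    have : (1:ℝ) ≤ min (FR v (5/4)) (FR v (19/5)) := le_min hv1.1 hv2.1
    linarith [encV.1]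
  have hminV : (0:ℝ) < min (FR v (5/4)) (FR v (19/5)) := by
    have := le_min hv1.1 hv2.1; linarith
  have hmaxV : (0:ℝ) < max (FR v (5/4)) (FR v (19/5)) := lt_of_lt_of_le hminV (min_le_max)
  have hinv1 : 1 / max (FR v (5/4)) (FR v (19/5)) ≤ 1 / cfValue B :=
    one_div_le_one_div_of_le hBpos encV.2
  have hinv2 : 1 / cfValue B ≤ 1 / min (FR v (5/4)) (FR v (19/5)) :=
    one_div_le_one_div_of_le hminV encV.1
  -- valQ computations
  have pu1 := FP_pos (w := u) qlo_pos
  have pu2 := FP_pos (w := u) qhi_pos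
  have pv1 := FP_pos (w := v) qlo_pos
  have pv2 := FP_pos (w := v) qhi_pos
  have vu1 : valQ (FP u qlo) = FR u (5/4) := by rw [FP_val qlo_pos, valQ_qlo]
  have vu2 : valQ (FP u qhi) = FR u (19/5) := by rw [FP_val qhi_pos, valQ_qhi]
  have vv1 : valQ (FP v qlo) = FR v (5/4) := by rw [FP_val qlo_pos, valQ_qlo]
  have vv2 : valQ (FP v qhi) = FR v (19/5) := by rw [FP_val qhi_pos, valQ_qhi]
  have vLo : valQ (lamLoP u v)
      = min (FR u (5/4)) (FR u (19/5)) + 1 / max (FR v (5/4)) (FR v (19/5)) := by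
    unfold lamLoP
    rw [addQ_val (minQ_pos pu1 pu2).2 (invQ_pos (maxQ_pos pv1 pv2)).2,
      minQ_val pu1.2 pu2.2, invQ_val, maxQ_val pv1.2 pv2.2, vu1, vu2, vv1, vv2]
  have vHi : valQ (lamHiP u v)
      = max (FR u (5/4)) (FR u (19/5)) + 1 / min (FR v (5/4)) (FR v (19/5)) := by
    unfold lamHiP
    rw [addQ_val (maxQ_pos pu1 pu2).2 (invQ_pos (minQ_pos pv1 pv2)).2,
      maxQ_val pu1.2 pu2.2, invQ_val, minQ_val pv1.2 pv2.2, vu1, vu2, vv1, vv2]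
  rw [hrep, vLo, vHi]
  constructor
  · have := encU.1; linarith
  · have := encU.2; linarith

def hiEps : ℤ × ℤ := (36767994173, 10 ^ 10)
def loEps : ℤ × ℤ := (36765994172, 10 ^ 10)
def exclKb (w : List ℕ) (j : ℕ) : Bool := ltQ hiEps (lamLoP (w.drop j) ((w.take j).reverse))
def excl0b (w : List ℕ) (c : ℕ) : Bool := ltQ (lamHiP (w.drop c) ((w.take c).reverse)) loEps
def badW (w : List ℕ) (c : ℕ) : Bool := excl0b w c || (List.range w.length).any (exclKb w)
def tgtW : List ℕ := [2, 1, 2, 3, 3, 2, 1, 1, 1]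

def grow : List Bool → List ℕ → ℕ → Bool
  | [], w, c => badW w c || ((w == tgtW) || (w == tgtW.reverse) ||
      ([1, 2, 3].all fun x => [1, 2, 3].all fun y => badW (y :: (w ++ [x])) (c + 1)))
  | d :: ds, w, c => badW w c ||
      ([1, 2, 3].all fun x => bif d then grow ds (x :: w) (c + 1) else grow ds (w ++ [x]) c)

set_option maxRecDepth 10000 in
theorem main_check :
    ([1, 2, 3].all fun a =>
      grow [false, true, false, true, false, true, false, true] [a] 0) = true := by decide

/-! ### Window consistency and soundness -/

def ConsW (S : ℤ → ℕ) (w : List ℕ) (c : ℕ) : Prop :=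
  ∀ i, i < w.length → w.getD i 0 = S ((i : ℤ) - (c : ℤ))

lemma words_of_consW {S : ℤ → ℕ} {w : List ℕ} {c : ℕ} (hcons : ConsW S w c)
    {j : ℕ} (hj : j ≤ w.length) :
    w.drop j = (List.range (w.drop j).length).map
        (fun i : ℕ => S (((j : ℤ) - (c : ℤ)) + (i : ℤ))) ∧
    (w.take j).reverse = (List.range ((w.take j).reverse).length).map
        (fun i : ℕ => S (((j : ℤ) - (c : ℤ)) - 1 - (i : ℤ))) := by
  constructor
  · apply List.ext_getElem (by simp)
    intro i h1 h2
    have hlen : i < w.length - j := by simpa using h1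
    have hb : j + i < w.length := by omega
    rw [List.getElem_drop]
    rw [List.getElem_map, List.getElem_range]
    rw [← List.getD_eq_getElem w 0 hb]
    rw [hcons (j + i) hb]
    congr 1
    push_cast
    ring
  · apply List.ext_getElem (by simp)
    intro i h1 h2
    have hlen : i < j := by
      simp [List.length_take] at h1
      omega
    have hb : j - 1 - i < w.length := by omega
    have hrl : (w.take j).reverse.length = j := by simp; omega
    rw [List.getElem_reverse]
    have ht : (w.take j).length - 1 - i < (w.take j).length := by simp; omega
    rw [List.getElem_take]
    have e1 : (w.take j).length - 1 - i = j - 1 - i := by simp; omega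
    simp only [e1]
    rw [List.getElem_map, List.getElem_range]
    rw [← List.getD_eq_getElem w 0 hb]
    rw [hcons (j - 1 - i) hb]
    congr 1
    omega

lemma hiEps_pos : (0:ℤ) < hiEps.2 := by norm_num [hiEps]
lemma loEps_pos : (0:ℤ) < loEps.2 := by norm_num [loEps]

lemma badW_sound {S : ℤ → ℕ} (hS : ∀ n, 1 ≤ S n ∧ S n ≤ 3)
    (hub : ∀ k : ℤ, lambdaK k S ≤ valQ hiEps)
    (hlb : valQ loEps ≤ lambdaK 0 S)
    {w : List ℕ} {c : ℕ} (hc : c ≤ w.length) (hcons : ConsW S w c)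
    (hb : badW w c = true) : False := by
  have key : ∀ j : ℕ, j ≤ w.length →
      valQ (lamLoP (w.drop j) ((w.take j).reverse)) ≤ lambdaK ((j:ℤ) - (c:ℤ)) S ∧
      lambdaK ((j:ℤ) - (c:ℤ)) S ≤ valQ (lamHiP (w.drop j) ((w.take j).reverse)) := by
    intro j hj
    have hw := words_of_consW hcons hj
    exact lambdaK_bounds hS ((j:ℤ) - (c:ℤ)) _ _ hw.1 hw.2
  unfold badW at hb
  rw [Bool.or_eq_true] at hb
  rcases hb with h0 | hK
  · -- two-sided check at center 0
    have hk := (key c hc).2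
    rw [sub_self] at hk
    have hlt := (ltQ_iff (lamHiP_pos _ _).2 loEps_pos).1 h0
    linarith
  · rcases List.any_eq_true.1 hK with ⟨j, hjmem, hj⟩
    have hjlt : j < w.length := List.mem_range.1 hjmem
    have hk := (key j hjlt.le).1
    have hlt := (ltQ_iff hiEps_pos (lamLoP_pos _ _).2).1 hj
    have := hub ((j:ℤ) - (c:ℤ))
    linarith

lemma consW_cons {S : ℤ → ℕ} {w : List ℕ} {c : ℕ} {y : ℕ}
    (h : ConsW S w c) (hy : y = S (-(c:ℤ) - 1)) : ConsW S (y :: w) (c + 1) := by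
  intro i hi
  cases i with
  | zero =>
    show y = S ((0:ℤ) - (c+1 : ℕ))
    rw [hy]; congr 1; push_cast; ring
  | succ i =>
    have hi' : i < w.length := by simpa using hi
    show w.getD i 0 = _
    rw [h i hi']; congr 1; push_cast; ring

lemma consW_append {S : ℤ → ℕ} {w : List ℕ} {c : ℕ} {x : ℕ}
    (h : ConsW S w c) (hx : x = S ((w.length : ℤ) - (c:ℤ))) : ConsW S (w ++ [x]) c := by
  intro i hi
  simp only [List.length_append, List.length_cons, List.length_nil] at hi
  rcases lt_or_eq_of_le (Nat.lt_succ_iff.1 (by omega : i < w.length + 1)) with hlt | heq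
  · have hb : i < w.length := hlt
    have : (w ++ [x]).getD i 0 = w.getD i 0 := by
      rw [List.getD_eq_getElem _ 0 (by simp; omega), List.getD_eq_getElem w 0 hb]
      exact List.getElem_append_left _
    rw [this]; exact h i hb
  · subst heq
    have : (w ++ [x]).getD w.length 0 = x := by
      rw [List.getD_eq_getElem _ 0 (by simp)]
      simp
    rw [this, hx]

lemma target_case {S : ℤ → ℕ} (hcons : ConsW S tgtW 4) :
    ∀ i : ℤ, -4 ≤ i → i ≤ 4 → S i = P1 i := by
  intro i h1 h2
  have hlt : (i + 4).toNat < tgtW.length := by simp [tgtW]; omega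
  have h := hcons (i + 4).toNat hlt
  have hidx : (((i + 4).toNat : ℕ) : ℤ) - (4:ℕ) = i := by omega
  rw [hidx] at h
  rw [← h]
  clear h hlt hidx
  interval_cases i <;> decide

lemma reverse_case {S : ℤ → ℕ} (hcons : ConsW S tgtW.reverse 4) :
    ∀ i : ℤ, -4 ≤ i → i ≤ 4 → S (-i) = P1 i := by
  intro i h1 h2
  have hlt : (-i + 4).toNat < tgtW.reverse.length := by simp [tgtW]; omega
  have h := hcons (-i + 4).toNat hlt
  have hidx : (((-i + 4).toNat : ℕ) : ℤ) - (4:ℕ) = -i := by omega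
  rw [hidx] at h
  rw [← h]
  clear h hlt hidx
  interval_cases i <;> decide

lemma grow_sound {S : ℤ → ℕ} (hS : ∀ n, 1 ≤ S n ∧ S n ≤ 3)
    (hub : ∀ k : ℤ, lambdaK k S ≤ valQ hiEps)
    (hlb : valQ loEps ≤ lambdaK 0 S) :
    ∀ (dirs : List Bool) (w : List ℕ) (c : ℕ), grow dirs w c = true → ConsW S w c →
      c ≤ w.length →
      ((∀ i : ℤ, -4 ≤ i → i ≤ 4 → S i = P1 i) ∨
        (∀ i : ℤ, -4 ≤ i → i ≤ 4 → S (-i) = P1 i)) ∨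
      ¬ (c + dirs.count true = 4) := by
  intro dirs
  induction dirs with
  | nil =>
    intro w c hg hcons hc
    by_cases hc4 : c + (List.count true []) = 4
    swap
    · exact Or.inr hc4
    left
    simp only [List.count_nil, Nat.add_zero] at hc4
    subst hc4
    unfold grow at hg
    rw [Bool.or_eq_true] at hg
    rcases hg with hb | hg2
    · exact absurd hb (by intro hb'; exact badW_sound hS hub hlb hc hcons hb')
    rw [Bool.or_eq_true] at hg2
    rcases hg2 with htt | hext
    case _ =>
      rw [Bool.or_eq_true] at htt
      rcases htt with ht | ht
      · left; exact target_case (by rwa [eq_of_beq ht] at hcons)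
      · right; exact reverse_case (by rwa [eq_of_beq ht] at hcons)
    · exfalso
      set x := S ((w.length : ℤ) - (4:ℕ)) with hx_def
      set y := S (-((4:ℕ):ℤ) - 1) with hy_def
      have hx13 := hS ((w.length : ℤ) - (4:ℕ))
      have hy13 := hS (-((4:ℕ):ℤ) - 1)
      have hxmem : x ∈ ([1,2,3] : List ℕ) := by
        simp only [List.mem_cons, List.mem_singleton]; omega
      have hymem : y ∈ ([1,2,3] : List ℕ) := by
        simp only [List.mem_cons, List.mem_singleton]; omega
      have h1 := List.all_eq_true.1 hext x hxmem
      have h2 := List.all_eq_true.1 h1 y hymem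
      have hcons' : ConsW S (y :: (w ++ [x])) (4 + 1) :=
        consW_cons (consW_append hcons (by rw [hx_def])) (by rw [hy_def])
      exact badW_sound hS hub hlb (by simp; omega) hcons' h2
  | cons d ds ih =>
    intro w c hg hcons hc
    by_cases hc4 : c + (List.count true (d :: ds)) = 4
    swap
    · exact Or.inr hc4
    unfold grow at hg
    rw [Bool.or_eq_true] at hg
    rcases hg with hb | hall
    · exact absurd hb (by intro hb'; exact badW_sound hS hub hlb hc hcons hb')
    cases d with
    | true =>
      set z := S (-(c:ℤ) - 1) with hz_def
      have hz13 := hS (-(c:ℤ) - 1)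
      have hzmem : z ∈ ([1,2,3] : List ℕ) := by
        simp only [List.mem_cons, List.mem_singleton]; omega
      have h1 := List.all_eq_true.1 hall z hzmem
      simp only [cond_true] at h1
      have := ih (z :: w) (c + 1) h1 (consW_cons hcons (by rw [hz_def])) (by simp; omega)
      rcases this with hgoal | hcnt
      · exact Or.inl hgoal
      · exfalso; apply hcnt
        have : (true :: ds).count true = ds.count true + 1 := by simp
        omega
    | false =>
      set z := S ((w.length : ℤ) - (c:ℤ)) with hz_def
      have hz13 := hS ((w.length : ℤ) - (c:ℤ))
      have hzmem : z ∈ ([1,2,3] : List ℕ) := by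
        simp only [List.mem_cons, List.mem_singleton]; omega
      have h1 := List.all_eq_true.1 hall z hzmem
      simp only [cond_false] at h1
      have := ih (w ++ [z]) c h1 (consW_append hcons (by rw [hz_def])) (by simp; omega)
      rcases this with hgoal | hcnt
      · exact Or.inl hgoal
      · exfalso; apply hcnt
        have : (false :: ds).count true = ds.count true := by simp
        omega

/-! ### Bounds on j₀ = λ₀(P₁) and the main theorem -/

def fwdP : List ℕ := [3,2,1,1,1,2,1,2,3,3,2,1,1,1,2,1,2,3,3,2,1,1,1,2,1]
def bwdP : List ℕ := [3,2,1,2,1,1,1,2,3,3,2,1,2,1,1,1,2,3,3,2,1,2,1,1,1]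

lemma P1_ok : ∀ n : ℤ, 1 ≤ P1 n ∧ P1 n ≤ 3 := by
  intro n
  constructor <;> (unfold P1; split <;> omega)

lemma fwdP_spec : fwdP = (List.range fwdP.length).map (fun i : ℕ => P1 ((0:ℤ) + (i:ℤ))) := by
  decide

lemma bwdP_spec : bwdP = (List.range bwdP.length).map (fun i : ℕ => P1 ((0:ℤ) - 1 - (i:ℤ))) := by
  decide

lemma lambdaK_zero (S : ℤ → ℕ) : lambdaK 0 S = lambda0 S := by
  unfold lambdaK; congr 1; funext n; rw [add_zero]

lemma j0_lb : (36766994172 : ℝ)/10^10 ≤ lambda0 P1 := by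
  have hb := lambdaK_bounds P1_ok 0 fwdP bwdP fwdP_spec bwdP_spec
  have h1 : leQ ((36766994172 : ℤ), 10^10) (lamLoP fwdP bwdP) = true := by decide
  have h2 := (leQ_iff (by norm_num) (lamLoP_pos fwdP bwdP).2).1 h1
  have h3 : valQ ((36766994172 : ℤ), 10^10) = (36766994172:ℝ)/10^10 := by
    norm_num [valQ]
  rw [← lambdaK_zero P1]
  rw [h3] at h2
  linarith [hb.1]

lemma j0_ub : lambda0 P1 ≤ (36766994173 : ℝ)/10^10 := by
  have hb := lambdaK_bounds P1_ok 0 fwdP bwdP fwdP_spec bwdP_spec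
  have h1 : leQ (lamHiP fwdP bwdP) ((36766994173 : ℤ), 10^10) = true := by decide
  have h2 := (leQ_iff (lamHiP_pos fwdP bwdP).2 (by norm_num)).1 h1
  have h3 : valQ ((36766994173 : ℤ), 10^10) = (36766994173:ℝ)/10^10 := by
    norm_num [valQ]
  rw [← lambdaK_zero P1]
  rw [h3] at h2
  linarith [hb.2]

lemma lambdaK_le_five {S : ℤ → ℕ} (hS : ∀ n, 1 ≤ S n ∧ S n ≤ 3) (k : ℤ) :
    lambdaK k S ≤ 5 := by
  have hA : SeqOK (fun n : ℕ => S ((n:ℤ) + k)) := fun n => hS _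
  have hB : SeqOK (fun n : ℕ => S (-(n:ℤ) - 1 + k)) := fun n => hS _
  have h1 := cfValue_ub hA
  have h2 := cfValue_lb hB
  have h3 : 1 / cfValue (fun n : ℕ => S (-(n:ℤ) - 1 + k)) ≤ 1/(5/4) :=
    one_div_le_one_div_of_le (by norm_num) h2
  have hrep : lambdaK k S = cfValue (fun n : ℕ => S ((n:ℤ) + k))
      + 1 / cfValue (fun n : ℕ => S (-(n:ℤ) - 1 + k)) := rfl
  rw [hrep]
  linarith


/-- Local uniqueness near `j₀ = λ₀(P₁)`: if `|λ₀(S) - j₀| ≤ 10⁻⁴` and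
`m(S) ≤ j₀ + 10⁻⁴`, then `S` or its transpose agrees with `P₁` on `[-4, 4]`. -/
theorem local_uniqueness_I_region_one (S : ℤ → ℕ)
    (hS : ∀ n : ℤ, S n ∈ ({1, 2, 3} : Set ℕ))
    (hl : |lambda0 S - lambda0 P1| ≤ 1 / 10 ^ 4)
    (hm : markovValue S ≤ lambda0 P1 + 1 / 10 ^ 4) :
    (∀ i : ℤ, -4 ≤ i → i ≤ 4 → S i = P1 i) ∨
      (∀ i : ℤ, -4 ≤ i → i ≤ 4 → S (-i) = P1 i) := by
  have hS' : ∀ n : ℤ, 1 ≤ S n ∧ S n ≤ 3 := by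
    intro n
    have := hS n
    simp only [Set.mem_insert_iff, Set.mem_singleton_iff] at this
    rcases this with h | h | h <;> omega
  have habs := abs_le.1 hl
  have hbdd : BddAbove (Set.range fun k : ℤ => lambdaK k S) := by
    refine ⟨5, ?_⟩
    rintro x ⟨k, rfl⟩
    exact lambdaK_le_five hS' k
  have hub : ∀ k : ℤ, lambdaK k S ≤ valQ hiEps := by
    intro k
    have h1 : lambdaK k S ≤ markovValue S := le_ciSup hbdd k
    have h2 : valQ hiEps = (36767994173 : ℝ)/10^10 := by norm_num [valQ, hiEps]
    rw [h2]
    have := j0_ub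
    have harith : (36766994173 : ℝ)/10^10 + 1/10^4 = (36767994173 : ℝ)/10^10 := by norm_num
    linarith [hm]
  have hlb : valQ loEps ≤ lambdaK 0 S := by
    rw [lambdaK_zero S]
    have h2 : valQ loEps = (36765994172 : ℝ)/10^10 := by norm_num [valQ, loEps]
    rw [h2]
    have := j0_lb
    have harith : (36766994172 : ℝ)/10^10 - 1/10^4 = (36765994172 : ℝ)/10^10 := by norm_num
    linarith [habs.1]
  have hmem : S 0 ∈ ([1,2,3] : List ℕ) := by
    have := hS' 0
    simp only [List.mem_cons, List.mem_singleton]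
    omega
  have hg := List.all_eq_true.1 main_check (S 0) hmem
  have hcons : ConsW S [S 0] 0 := by
    intro i hi
    have hi0 : i = 0 := by simpa using hi
    subst hi0
    show S 0 = S ((0:ℤ) - (0:ℕ))
    norm_num
  have hres := grow_sound hS' hub hlb _ _ _ hg hcons (by simp)
  rcases hres with hgoal | hcnt
  · exact hgoal
  · exact absurd (by decide) hcnt
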